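/- If M₃(a) < ∞, then Â(ξ + 2πn) ≥ C(a)|ξ|² for all ξ ∈ [−π,π)^d and n ∈ ℤ^d, where C(a) = min{ (1/4)ℳ(a), 𝒞_{r(a)}(a) π^{−2} d^{−1}, 𝒞_π(a) π^{−2} d^{−1} } > 0 with r(a) = 3ℳ(a)/(2M₃(a)). -/

import Mathlib

open MeasureTheory
open scoped RealInnerProductSpace

noncomputable section

def intVec (d : ℕ) (n : Fin d → ℤ) : EuclideanSpace ℝ (Fin d) := WithLp.toLp 2 (fun i => (n i : ℝ))

def dualCell (d : ℕ) : Set (EuclideanSpace ℝ (Fin d)) :=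
  {ξ | ∀ i, ξ i ∈ Set.Ico (-Real.pi) Real.pi}

/-!
Write `Â(y) = ∫ (1 - cos ⟪z, y⟫) a(z) dz`. Near the origin the cubic Taylor bound
`1 - cos t ≥ t²/2 - |t|³/6` gives `Â(y) ≥ ℳ(a)|y|²/2 - M₃(a)|y|³/6 ≥ ℳ(a)|y|²/4` as long as
`|y| ≤ r(a)`. For `|y| ≥ r` one has `Â(y) ≥ 𝒞_r(a) ≥ 𝒞_r(a) |ξ|² / (π²d)`, since `|ξ|² ≤ π²d` on the
cell; this covers `y = ξ` with `|ξ| > r(a)`, and `y = ξ + 2πn` with `n ≠ 0`, where `|y| ≥ π`.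
All constants are positive because `Â(y) > 0` for `y ≠ 0`: `cos ⟪z, y⟫ = 1` only on countably
many parallel hyperplanes, a null set, while `a` does not vanish a.e.
-/

open Set Real

theorem Real.sq_div_two_sub_abs_pow_three_div_six_le_one_sub_cos (t : ℝ) :
    t ^ 2 / 2 - |t| ^ 3 / 6 ≤ 1 - cos t := by
  wlog ht : 0 ≤ t generalizing t
  · simpa [abs_neg, cos_neg] using this (-t) (by linarith)
  rw [abs_of_nonneg ht]
  rcases le_total t 3 with h3 | h3
  · have hsin : t / 2 - (t / 2) ^ 3 / 6 ≤ sin (t / 2) := sin_ge_sub_cube (by linarith)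
    have hcos : cos t = 1 - 2 * sin (t / 2) ^ 2 := by
      rw [← cos_two_mul_eq_one_sub, mul_div_cancel₀ t two_ne_zero]
    have hpos : 0 ≤ t / 2 - (t / 2) ^ 3 / 6 := by
      nlinarith [mul_nonneg ht (mul_nonneg ht (by linarith : (0:ℝ) ≤ 3 - t))]
    nlinarith [pow_le_pow_left₀ hpos hsin 2, pow_nonneg ht 3]
  · nlinarith [cos_le_one t, sq_nonneg t]

theorem integral_mul_pos_of_ae_ne_zero {α : Type*} [MeasurableSpace α] {μ : Measure α}
    {f g : α → ℝ} (hf : 0 ≤ f) (hg : 0 ≤ g) (hfg : Integrable (fun x => f x * g x) μ)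
    (hf0 : ∀ᵐ x ∂μ, f x ≠ 0) (hg0 : 0 < μ (Function.support g)) :
    0 < ∫ x, f x * g x ∂μ := by
  rw [integral_pos_iff_support_of_nonneg (fun x => mul_nonneg (hf x) (hg x)) hfg,
    Function.support_mul, inter_comm]
  exact (measure_inter_conull (s := Function.support g) hf0).symm ▸ hg0

section

variable {E : Type*} [NormedAddCommGroup E] [InnerProductSpace ℝ E]
  [MeasurableSpace E] {μ : Measure E} {a : E → ℝ}

theorem mul_norm_sq_le_integral_mul_inner_sq {M : ℝ}
    (hM : M ∈ lowerBounds ((fun θ => ∫ z, a z * ⟪z, θ⟫ ^ 2 ∂μ) '' {θ | ‖θ‖ = 1})) (ξ : E) :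
    M * ‖ξ‖ ^ 2 ≤ ∫ z, a z * ⟪z, ξ⟫ ^ 2 ∂μ := by
  rcases eq_or_ne ξ 0 with rfl | hξ
  · simp
  have hscale : ∀ z, a z * ⟪z, ξ⟫ ^ 2 = ‖ξ‖ ^ 2 * (a z * ⟪z, ‖ξ‖⁻¹ • ξ⟫ ^ 2) := fun z => by
    rw [real_inner_smul_right]
    field_simp [norm_ne_zero_iff.2 hξ]
  simp_rw [hscale, integral_const_mul]
  rw [mul_comm]
  exact mul_le_mul_of_nonneg_left (hM ⟨_, norm_smul_inv_norm hξ, rfl⟩) (sq_nonneg _)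

variable [BorelSpace E]

theorem integrable_one_sub_cos_inner_mul (ha : Integrable a μ) (y : E) :
    Integrable (fun z => (1 - cos ⟪z, y⟫) * a z) μ := by
  refine ha.bdd_mul (c := 2) (by fun_prop) (ae_of_all _ fun z => ?_)
  rw [Real.norm_eq_abs, abs_le]
  constructor <;> linarith [neg_one_le_cos ⟪z, y⟫, cos_le_one ⟪z, y⟫]

theorem integrable_mul_inner_sq (ha : Integrable a μ) (ha0 : 0 ≤ a)
    (hM3 : Integrable (fun z => ‖z‖ ^ 3 * a z) μ) (ξ : E) :
    Integrable (fun z => a z * ⟪z, ξ⟫ ^ 2) μ := by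
  refine ((ha.add hM3).const_mul (‖ξ‖ ^ 2)).mono' (by fun_prop) (ae_of_all _ fun z => ?_)
  have hinner : ⟪z, ξ⟫ ^ 2 ≤ ‖z‖ ^ 2 * ‖ξ‖ ^ 2 := by
    rw [← mul_pow, ← sq_abs]
    exact pow_le_pow_left₀ (abs_nonneg _) (abs_real_inner_le_norm z ξ) 2
  have hnorm : ‖z‖ ^ 2 ≤ 1 + ‖z‖ ^ 3 := by
    nlinarith [norm_nonneg z, sq_nonneg (‖z‖ - 1), sq_nonneg ‖z‖]
  rw [Pi.add_apply, Real.norm_eq_abs, abs_of_nonneg (mul_nonneg (ha0 z) (sq_nonneg _))]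
  nlinarith [ha0 z, mul_le_mul_of_nonneg_left hinner (ha0 z),
    mul_le_mul_of_nonneg_left hnorm (mul_nonneg (ha0 z) (sq_nonneg ‖ξ‖))]

theorem sub_le_integral_one_sub_cos_inner_mul (ha : Integrable a μ) (ha0 : 0 ≤ a)
    (hM3 : Integrable (fun z => ‖z‖ ^ 3 * a z) μ) (ξ : E) :
    (∫ z, a z * ⟪z, ξ⟫ ^ 2 ∂μ) / 2 - ‖ξ‖ ^ 3 / 6 * ∫ z, ‖z‖ ^ 3 * a z ∂μ ≤
      ∫ z, (1 - cos ⟪z, ξ⟫) * a z ∂μ := by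
  have h2 := integrable_mul_inner_sq ha ha0 hM3 ξ
  rw [← integral_div, ← integral_const_mul, ← integral_sub (h2.div_const 2) (hM3.const_mul _)]
  refine integral_mono ((h2.div_const 2).sub (hM3.const_mul _))
    (integrable_one_sub_cos_inner_mul ha ξ) fun z => ?_
  have htaylor := Real.sq_div_two_sub_abs_pow_three_div_six_le_one_sub_cos ⟪z, ξ⟫
  have hcube : |⟪z, ξ⟫| ^ 3 ≤ ‖z‖ ^ 3 * ‖ξ‖ ^ 3 := by
    rw [← mul_pow]
    exact pow_le_pow_left₀ (abs_nonneg _) (abs_real_inner_le_norm z ξ) 3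
  calc a z * ⟪z, ξ⟫ ^ 2 / 2 - ‖ξ‖ ^ 3 / 6 * (‖z‖ ^ 3 * a z)
      = (⟪z, ξ⟫ ^ 2 / 2 - ‖z‖ ^ 3 * ‖ξ‖ ^ 3 / 6) * a z := by ring
    _ ≤ (1 - cos ⟪z, ξ⟫) * a z := mul_le_mul_of_nonneg_right (by linarith) (ha0 z)

theorem le_integral_one_sub_cos_inner_mul_of_norm_le (ha : Integrable a μ) (ha0 : 0 ≤ a)
    (hM3 : Integrable (fun z => ‖z‖ ^ 3 * a z) μ) {M : ℝ}
    (hM : M ∈ lowerBounds ((fun θ => ∫ z, a z * ⟪z, θ⟫ ^ 2 ∂μ) '' {θ | ‖θ‖ = 1}))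
    (hM3pos : 0 < ∫ z, ‖z‖ ^ 3 * a z ∂μ) {ξ : E}
    (hξ : ‖ξ‖ ≤ 3 * M / (2 * ∫ z, ‖z‖ ^ 3 * a z ∂μ)) :
    M / 4 * ‖ξ‖ ^ 2 ≤ ∫ z, (1 - cos ⟪z, ξ⟫) * a z ∂μ := by
  rw [le_div_iff₀ (by positivity)] at hξ
  have hcube := mul_le_mul_of_nonneg_left hξ (sq_nonneg ‖ξ‖)
  have hquad := mul_norm_sq_le_integral_mul_inner_sq hM ξ
  have htaylor := sub_le_integral_one_sub_cos_inner_mul ha ha0 hM3 ξ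
  nlinarith

variable [FiniteDimensional ℝ E] [μ.IsAddHaarMeasure]

theorem ae_inner_notMem_of_countable {y : E} (hy : y ≠ 0) {N : Set ℝ} (hN : N.Countable) :
    ∀ᵐ z ∂μ, ⟪z, y⟫ ∉ N := by
  have hL : Function.Surjective (innerSL ℝ y : E →L[ℝ] ℝ).toLinearMap := fun t =>
    ⟨(t / ⟪y, y⟫) • y, by simp [hy]⟩
  have := (ae_comp_linearMap_mem_iff _ μ volume hL hN.measurableSet.compl).2
    (compl_mem_ae_iff.2 (hN.measure_zero volume))
  simpa [real_inner_comm] using this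

theorem ae_inner_ne_zero {y : E} (hy : y ≠ 0) : ∀ᵐ z ∂μ, ⟪z, y⟫ ≠ 0 :=
  ae_inner_notMem_of_countable hy (countable_singleton 0)

theorem ae_one_sub_cos_inner_ne_zero {y : E} (hy : y ≠ 0) :
    ∀ᵐ z ∂μ, 1 - cos ⟪z, y⟫ ≠ 0 := by
  have hN : {t : ℝ | cos t = 1} = range fun k : ℤ => k * (2 * π) := by
    ext t
    simp [cos_eq_one_iff]
  filter_upwards [ae_inner_notMem_of_countable (μ := μ) hy (hN ▸ countable_range _)] with z hz
  exact sub_ne_zero.2 (Ne.symm hz)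

theorem integral_one_sub_cos_inner_mul_pos (ha : Integrable a μ) (ha0 : 0 ≤ a)
    (hpos : 0 < μ (Function.support a)) {y : E} (hy : y ≠ 0) :
    0 < ∫ z, (1 - cos ⟪z, y⟫) * a z ∂μ :=
  integral_mul_pos_of_ae_ne_zero (fun _ => sub_nonneg.2 (cos_le_one _)) ha0
    (integrable_one_sub_cos_inner_mul ha y) (ae_one_sub_cos_inner_ne_zero hy) hpos

theorem integral_mul_inner_sq_pos (ha : Integrable a μ) (ha0 : 0 ≤ a)
    (hM3 : Integrable (fun z => ‖z‖ ^ 3 * a z) μ) (hpos : 0 < μ (Function.support a))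
    {θ : E} (hθ : θ ≠ 0) : 0 < ∫ z, a z * ⟪z, θ⟫ ^ 2 ∂μ := by
  simp_rw [mul_comm (a _)]
  refine integral_mul_pos_of_ae_ne_zero (fun _ => sq_nonneg _) ha0 ?_ ?_ hpos
  · simpa only [mul_comm] using integrable_mul_inner_sq ha ha0 hM3 θ
  · filter_upwards [ae_inner_ne_zero hθ] with z hz using pow_ne_zero 2 hz

theorem integral_norm_pow_mul_pos [Nontrivial E] (ha0 : 0 ≤ a) {k : ℕ}
    (hk : Integrable (fun z => ‖z‖ ^ k * a z) μ) (hpos : 0 < μ (Function.support a)) :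
    0 < ∫ z, ‖z‖ ^ k * a z ∂μ := by
  refine integral_mul_pos_of_ae_ne_zero (fun _ => by positivity) ha0 hk ?_ hpos
  filter_upwards [Measure.ae_ne μ 0] with z hz using pow_ne_zero k (norm_ne_zero_iff.2 hz)

end

theorem intVec_zero (d : ℕ) : intVec d 0 = 0 := by
  ext i
  simp [intVec]

theorem norm_sq_le_of_mem_dualCell {d : ℕ} {ξ : EuclideanSpace ℝ (Fin d)}
    (hξ : ξ ∈ dualCell d) : ‖ξ‖ ^ 2 ≤ π ^ 2 * d := by
  rw [EuclideanSpace.norm_sq_eq]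
  calc ∑ i, ‖ξ i‖ ^ 2 ≤ ∑ _i : Fin d, π ^ 2 := Finset.sum_le_sum fun i _ => by
        rw [Real.norm_eq_abs, sq_abs]
        exact sq_le_sq' (hξ i).1 (hξ i).2.le
    _ = π ^ 2 * d := by simp [mul_comm]

theorem div_mul_norm_sq_le_of_mem_dualCell {d : ℕ} {ξ : EuclideanSpace ℝ (Fin d)}
    (hξ : ξ ∈ dualCell d) {c : ℝ} (hc : 0 ≤ c) : c / (π ^ 2 * d) * ‖ξ‖ ^ 2 ≤ c := by
  rcases eq_or_ne d 0 with rfl | hd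
  · simpa using hc
  calc c / (π ^ 2 * d) * ‖ξ‖ ^ 2 ≤ c / (π ^ 2 * d) * (π ^ 2 * d) := by
        gcongr
        exact norm_sq_le_of_mem_dualCell hξ
    _ = c := div_mul_cancel₀ _ (by positivity)

theorem pi_le_abs_add_two_pi_mul {t : ℝ} (ht : t ∈ Ico (-π) π) {k : ℤ} (hk : k ≠ 0) :
    π ≤ |t + 2 * π * k| := by
  rw [le_abs]
  rcases hk.lt_or_gt with hk | hk
  · have : (k : ℝ) ≤ -1 := by exact_mod_cast Int.le_sub_one_of_lt hk
    right
    nlinarith [ht.2, pi_pos]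
  · have : (1 : ℝ) ≤ k := by exact_mod_cast hk
    left
    nlinarith [ht.1, pi_pos]

theorem pi_le_norm_add_two_pi_smul_intVec {d : ℕ} {ξ : EuclideanSpace ℝ (Fin d)}
    (hξ : ξ ∈ dualCell d) {n : Fin d → ℤ} (hn : n ≠ 0) :
    π ≤ ‖ξ + (2 * π) • intVec d n‖ := by
  obtain ⟨i, hi⟩ := Function.ne_iff.1 hn
  calc π ≤ |ξ i + 2 * π * n i| := pi_le_abs_add_two_pi_mul (hξ i) hi
    _ = ‖(ξ + (2 * π) • intVec d n) i‖ := by simp [intVec]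
    _ ≤ _ := PiLp.norm_apply_le _ i

theorem stmt_12_general (d : ℕ) (hd : 0 < d)
    (a : EuclideanSpace ℝ (Fin d) → ℝ)
    (ha : Integrable a) (ha0 : ∀ x, 0 ≤ a x)
    (hpos : 0 < (volume : Measure (EuclideanSpace ℝ (Fin d))) {z | a z ≠ 0})
    (hM3 : Integrable fun z : EuclideanSpace ℝ (Fin d) => ‖z‖ ^ 3 * a z)
    -- `ℳ(a) = min_{|θ|=1} ∫ a(z) ⟨z,θ⟩² dz`
    (M : ℝ)
    (hM : IsLeast
      ((fun θ : EuclideanSpace ℝ (Fin d) => ∫ z, a z * ⟪z, θ⟫ ^ 2) '' {θ | ‖θ‖ = 1}) M)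
    -- `𝒞_r(a) = min_{|y| ≥ r} Â(y)`
    (Cr : ℝ → ℝ)
    (hCr : ∀ r : ℝ, 0 < r → IsLeast
      ((fun y : EuclideanSpace ℝ (Fin d) => ∫ z, (1 - Real.cos ⟪z, y⟫) * a z) ''
        {y | r ≤ ‖y‖}) (Cr r)) :
    (0 < min (min (M / 4) (Cr (3 * M / (2 * ∫ z, ‖z‖ ^ 3 * a z)) / (Real.pi ^ 2 * d)))
        (Cr Real.pi / (Real.pi ^ 2 * d))) ∧
    ∀ ξ ∈ dualCell d, ∀ n : Fin d → ℤ,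
      min (min (M / 4) (Cr (3 * M / (2 * ∫ z, ‖z‖ ^ 3 * a z)) / (Real.pi ^ 2 * d)))
          (Cr Real.pi / (Real.pi ^ 2 * d)) * ‖ξ‖ ^ 2
        ≤ ∫ z, (1 - Real.cos ⟪z, ξ + (2 * Real.pi) • intVec d n⟫) * a z := by
  obtain ⟨θ, hθ, hMθ⟩ := hM.1
  have hθ0 : θ ≠ 0 := by
    rintro rfl
    simp at hθ
  have : Nontrivial (EuclideanSpace ℝ (Fin d)) := ⟨θ, 0, hθ0⟩
  have hMpos : 0 < M := hMθ ▸ integral_mul_inner_sq_pos ha ha0 hM3 hpos hθ0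
  have hM3pos := integral_norm_pow_mul_pos ha0 hM3 hpos
  have hCr_pos : ∀ r, 0 < r → 0 < Cr r := fun r hr => by
    obtain ⟨y, hy, hCy⟩ := (hCr r hr).1
    exact hCy ▸ integral_one_sub_cos_inner_mul_pos ha ha0 hpos (norm_pos_iff.1 (hr.trans_le hy))
  have hπd : 0 < π ^ 2 * d := by positivity
  set r₀ := 3 * M / (2 * ∫ z, ‖z‖ ^ 3 * a z)
  have hr₀ : 0 < r₀ := by positivity
  refine ⟨lt_min (lt_min (by positivity) (div_pos (hCr_pos _ hr₀) hπd))
    (div_pos (hCr_pos _ pi_pos) hπd), fun ξ hξ n => ?_⟩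
  have hfar : ∀ r, 0 < r → ∀ y : EuclideanSpace ℝ (Fin d), r ≤ ‖y‖ →
      Cr r / (π ^ 2 * d) * ‖ξ‖ ^ 2 ≤ ∫ z, (1 - cos ⟪z, y⟫) * a z := fun r hr y hy =>
    (div_mul_norm_sq_le_of_mem_dualCell hξ (hCr_pos r hr).le).trans ((hCr r hr).2 ⟨y, hy, rfl⟩)
  rcases eq_or_ne n 0 with rfl | hn
  · rw [intVec_zero, smul_zero, add_zero]
    rcases le_or_gt ‖ξ‖ r₀ with hξr | hξr
    · exact (mul_le_mul_of_nonneg_right ((min_le_left _ _).trans (min_le_left _ _))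
        (sq_nonneg _)).trans
        (le_integral_one_sub_cos_inner_mul_of_norm_le ha ha0 hM3 hM.2 hM3pos hξr)
    · exact (mul_le_mul_of_nonneg_right ((min_le_left _ _).trans (min_le_right _ _))
        (sq_nonneg _)).trans (hfar _ hr₀ ξ hξr.le)
  · exact (mul_le_mul_of_nonneg_right (min_le_right _ _) (sq_nonneg _)).trans
      (hfar _ pi_pos _ (pi_le_norm_add_two_pi_smul_intVec hξ hn))

/-- If `M₃(a) < ∞`, then `Â(ξ + 2πn) ≥ C(a)|ξ|²` for all `ξ ∈ [-π,π)ᵈ` and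
`n ∈ ℤᵈ`, where `C(a) = min{ ℳ(a)/4, 𝒞_{r(a)}(a) π⁻²d⁻¹, 𝒞_π(a) π⁻²d⁻¹ } > 0` with
`r(a) = 3ℳ(a)/(2M₃(a))`. -/
theorem stmt_12 (d : ℕ) (hd : 0 < d)
    (a : EuclideanSpace ℝ (Fin d) → ℝ)
    (ha : Integrable a) (ha0 : ∀ x, 0 ≤ a x) (haev : ∀ x, a (-x) = a x)
    (hpos : 0 < (volume : Measure (EuclideanSpace ℝ (Fin d))) {z | a z ≠ 0})
    (hM3 : Integrable fun z : EuclideanSpace ℝ (Fin d) => ‖z‖ ^ 3 * a z)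
    -- `ℳ(a) = min_{|θ|=1} ∫ a(z) ⟨z,θ⟩² dz`
    (M : ℝ)
    (hM : IsLeast
      ((fun θ : EuclideanSpace ℝ (Fin d) => ∫ z, a z * ⟪z, θ⟫ ^ 2) '' {θ | ‖θ‖ = 1}) M)
    -- `𝒞_r(a) = min_{|y| ≥ r} Â(y)`
    (Cr : ℝ → ℝ)
    (hCr : ∀ r : ℝ, 0 < r → IsLeast
      ((fun y : EuclideanSpace ℝ (Fin d) => ∫ z, (1 - Real.cos ⟪z, y⟫) * a z) ''
        {y | r ≤ ‖y‖}) (Cr r)) :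
    (0 < min (min (M / 4) (Cr (3 * M / (2 * ∫ z, ‖z‖ ^ 3 * a z)) / (Real.pi ^ 2 * d)))
        (Cr Real.pi / (Real.pi ^ 2 * d))) ∧
    ∀ ξ ∈ dualCell d, ∀ n : Fin d → ℤ,
      min (min (M / 4) (Cr (3 * M / (2 * ∫ z, ‖z‖ ^ 3 * a z)) / (Real.pi ^ 2 * d)))
          (Cr Real.pi / (Real.pi ^ 2 * d)) * ‖ξ‖ ^ 2
        ≤ ∫ z, (1 - Real.cos ⟪z, ξ + (2 * Real.pi) • intVec d n⟫) * a z :=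
  stmt_12_general d hd a ha ha0 hpos hM3 M hM Cr hCr
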